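/- (Key lemma in the proof of property (iii).) Let t ∈ H be nonzero and let φ be a group automorphism of H with induced ring automorphism Φ of R. Let α ∈ R be supported on ℤt with at least two elements in its support, and suppose there exists a unit u of R such that u · Φ(α) is supported on ℤt. Then φ(t) = t or φ(t) = -t; consequently Φ(α) = α or Φ(α) = ᾱ. -/

import Mathlib

/-!
Context: `H n = Fin n →₀ ℤ` is the free abelian group of rank `n`, and
`R n = AddMonoidAlgebra ℤ (H n)` is its integral group ring, i.e. the ring of
Laurent polynomials in `n` variables over `ℤ`.  For `h ∈ H n`, the basis
element `[h]` of `R n` is `AddMonoidAlgebra.single h 1`.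
-/

noncomputable section

/-- `H n` is the free abelian group of rank `n`. -/
abbrev H (n : ℕ) : Type := Fin n →₀ ℤ

/-- `R n` is the integral group ring `ℤ[H n]`. -/
abbrev R (n : ℕ) : Type := AddMonoidAlgebra ℤ (H n)

/-- The ring automorphism `Φ` of `R n` induced by a group automorphism `φ` of `H n`;
it is determined by `Φ [h] = [φ h]`. -/
def inducedAut {n : ℕ} (φ : H n ≃+ H n) : RingAut (R n) :=
  (AddMonoidAlgebra.domCongr ℤ ℤ φ).toRingEquiv

/-- The conjugation `C : x ↦ x̄`, the ring automorphism of `R n` induced by the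
group automorphism `h ↦ -h` of `H n`. -/
def conjC (n : ℕ) : RingAut (R n) := inducedAut (AddEquiv.neg (H n))

/-- The augmentation ring homomorphism `ε : R n →+* ℤ`, with `ε [h] = 1` for all `h`. -/
def aug (n : ℕ) : R n →+* ℤ :=
  AddMonoidAlgebra.liftNCRingHom (RingHom.id ℤ) 1 (fun _ _ => Commute.all _ _)

/-- `x ∈ R n` is supported on `ℤ t`: every element of its support is an integer
multiple of `t`. -/
def SupportedOn {n : ℕ} (t : H n) (x : R n) : Prop :=
  ∀ h ∈ x.coeff.support, ∃ k : ℤ, h = k • t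

/-- The set of natural numbers `N` such that some product of `N` elements of `R n`,
each of which equals `Φ^m α` or `Φ^m ᾱ` for some integer `m`, divides `x`. -/
def GammaSet {n : ℕ} (α : R n) (Φ : RingAut (R n)) (x : R n) : Set ℕ :=
  {N | ∃ l : List (R n), l.length = N ∧
    (∀ y ∈ l, ∃ m : ℤ, y = (Φ ^ m) α ∨ y = (Φ ^ m) (conjC n α)) ∧ l.prod ∣ x}

/-- `Γ_{α,Φ}(x)`: the largest `N` in `GammaSet α Φ x`. -/
def Gamma {n : ℕ} (α : R n) (Φ : RingAut (R n)) (x : R n) : ℕ := sSup (GammaSet α Φ x)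

/-!
The group ring `ℤ[H]` has only trivial units `c • [g]`: since `H` has two unique sums, a product
`f * g` with `|supp f| · |supp g| > 1` has at least two monomials that arise in only one way, so
its support has at least two elements. Hence the support of `u · Φ(α)` is the translate
`g + φ(supp α)`, and two distinct points `k₁ • t`, `k₂ • t` of `supp α` give
`(k₁ - k₂) • φ t ∈ ℤ t`.

An automorphism with `a • φ t = b • t`, `a` and `b` coprime, satisfies `a ^ k • φ^[k] t = b ^ k • t`,
so `a ^ k` divides a fixed nonzero coordinate of `t` for every `k`, forcing `a = ±1`; applying the
same to `φ⁻¹` gives `b = ±1`. Finally `Φ α` only depends on `φ t`, since `α` is supported on `ℤ t`.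
-/

open Finset

namespace AddMonoidAlgebra

variable {R A : Type*} [Semiring R] [NoZeroDivisors R]

lemma one_lt_card_support_mul [Add A] [TwoUniqueSums A] {f g : AddMonoidAlgebra R A}
    (h : 1 < #f.coeff.support * #g.coeff.support) : 1 < #(f * g).coeff.support := by
  obtain ⟨p, hp, q, hq, hpq, hup, huq⟩ := TwoUniqueSums.uniqueAdd_of_one_lt_card h
  rw [mem_product] at hp hq
  have mem_support {r : A × A} (hr : r.1 ∈ f.coeff.support ∧ r.2 ∈ g.coeff.support)
      (hu : UniqueAdd f.coeff.support g.coeff.support r.1 r.2) :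
      r.1 + r.2 ∈ (f * g).coeff.support := by
    rw [Finsupp.mem_support_iff, coeff_mul_add_of_uniqueAdd hu]
    exact mul_ne_zero (Finsupp.mem_support_iff.1 hr.1) (Finsupp.mem_support_iff.1 hr.2)
  refine one_lt_card.2 ⟨_, mem_support hp hup, _, mem_support hq huq, fun he => hpq ?_⟩
  obtain ⟨h1, h2⟩ := hup hq.1 hq.2 he.symm
  exact Prod.ext h1.symm h2.symm

lemma exists_eq_single_of_isUnit [AddMonoid A] [TwoUniqueSums A] [Nontrivial R]
    {u : AddMonoidAlgebra R A} (hu : IsUnit u) : ∃ a r, r ≠ 0 ∧ u = single a r := by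
  obtain ⟨v, huv⟩ := hu.exists_right_inv
  have hsupp : #u.coeff.support * #v.coeff.support ≤ 1 := by
    by_contra! h
    simpa [huv, one_def, coeff_single] using one_lt_card_support_mul h
  have hv : 0 < #v.coeff.support := by
    rw [card_pos, Finsupp.support_nonempty_iff, Ne, coeff_eq_zero]
    exact right_ne_zero_of_mul_eq_one huv
  have hu' : 0 < #u.coeff.support := by
    rw [card_pos, Finsupp.support_nonempty_iff, Ne, coeff_eq_zero]
    exact hu.ne_zero
  obtain ⟨a, r, hr, hua⟩ := Finsupp.card_support_eq_one'.1 (by nlinarith : #u.coeff.support = 1)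
  exact ⟨a, r, hr, coeff_injective hua⟩

end AddMonoidAlgebra

lemma Int.isUnit_of_forall_pow_dvd {a c : ℤ} (hc : c ≠ 0) (h : ∀ k : ℕ, a ^ k ∣ c) :
    IsUnit a := by
  by_contra ha
  obtain ⟨k, hk⟩ := Int.finiteMultiplicity_iff.2 ⟨mt Int.isUnit_iff_natAbs_eq.2 ha, hc⟩
  exact hk (h (k + 1))

section Rescaling

variable {M : Type*} [AddCommGroup M]

lemma AddMonoidHom.pow_smul_iterate_apply_eq {ψ : M →+ M} {x : M} {a b : ℤ}
    (h : a • ψ x = b • x) (k : ℕ) : a ^ k • (ψ^[k]) x = b ^ k • x := by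
  induction k with
  | zero => simp
  | succ k ih =>
    rw [Function.iterate_succ_apply', pow_succ', pow_succ, mul_smul, ← map_zsmul, ih, map_zsmul,
      smul_comm, h, smul_smul]

lemma AddMonoidHom.isUnit_of_smul_apply_eq_smul (ψ : M →+ M) (f : M →+ ℤ) {x : M}
    (hx : f x ≠ 0) {a b : ℤ} (hab : IsCoprime a b) (h : a • ψ x = b • x) : IsUnit a := by
  refine Int.isUnit_of_forall_pow_dvd hx fun k =>
    (hab.pow (m := k) (n := k)).dvd_of_dvd_mul_left ⟨f ((ψ^[k]) x), ?_⟩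
  simpa using (congrArg f (ψ.pow_smul_iterate_apply_eq h k)).symm

lemma AddEquiv.apply_eq_or_eq_neg_of_smul_apply_eq_smul [IsAddTorsionFree M] (φ : M ≃+ M)
    (f : M →+ ℤ) {x : M} (hx : f x ≠ 0) {a b : ℤ} (ha : a ≠ 0) (h : a • φ x = b • x) :
    φ x = x ∨ φ x = -x := by
  obtain ⟨g, a, b, hg, hab, rfl, rfl⟩ := Int.exists_gcd_one' (Int.gcd_pos_of_ne_zero_left b ha)
  rw [← Int.isCoprime_iff_gcd_eq_one] at hab
  replace h : a • φ x = b • x := by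
    rwa [mul_comm a, mul_comm b, mul_smul, mul_smul,
      zsmul_right_inj (Int.natCast_pos.2 hg).ne'] at h
  have h' : b • φ.symm x = a • x := by
    simpa using (congrArg φ.symm h).symm
  have hua := (φ : M →+ M).isUnit_of_smul_apply_eq_smul f hx hab h
  have hub := (φ.symm : M →+ M).isUnit_of_smul_apply_eq_smul f hx hab.symm h'
  rcases Int.isUnit_iff.1 hua with rfl | rfl <;> rcases Int.isUnit_iff.1 hub with rfl | rfl <;>
    simp_all [neg_eq_iff_eq_neg]

end Rescaling

section InducedAut

variable {n : ℕ}

lemma coeff_inducedAut_apply (φ : H n ≃+ H n) (x : R n) (h : H n) :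
    (inducedAut φ x).coeff (φ h) = x.coeff h := by
  simp [inducedAut]

lemma inducedAut_refl (x : R n) : inducedAut (AddEquiv.refl (H n)) x = x := by
  ext; simp [inducedAut]

lemma inducedAut_apply_eq_of_supportedOn {t : H n} {α : R n} (hα : SupportedOn t α)
    {φ ψ : H n ≃+ H n} (h : φ t = ψ t) : inducedAut φ α = inducedAut ψ α := by
  refine AddMonoidAlgebra.coeff_injective (Finsupp.mapDomain_congr fun x hx => ?_)
  obtain ⟨k, rfl⟩ := hα x hx
  simp [h]

end InducedAut

/-- **Key lemma in the proof of property (iii).**  If `α` is supported on `ℤ t`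
(`t ≠ 0`) with at least two elements in its support, and `u · Φ(α)` is supported
on `ℤ t` for some unit `u`, then `φ t = t` or `φ t = -t`; consequently
`Φ α = α` or `Φ α = ᾱ`. -/
theorem key_lemma_unit_times_image_supported {n : ℕ} (t : H n) (ht : t ≠ 0)
    (φ : H n ≃+ H n)
    (α : R n) (hαsupp : SupportedOn t α) (hαcard : 2 ≤ α.coeff.support.card)
    (u : (R n)ˣ) (hu : SupportedOn t ((u : R n) * inducedAut φ α)) :
    (φ t = t ∨ φ t = -t) ∧ (inducedAut φ α = α ∨ inducedAut φ α = conjC n α) := by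
  obtain ⟨g, c, hc, hug⟩ := AddMonoidAlgebra.exists_eq_single_of_isUnit u.isUnit
  have hmem (a : H n) (ha : a ∈ α.coeff.support) : ∃ m : ℤ, g + φ a = m • t := by
    refine hu _ ?_
    rw [hug, Finsupp.mem_support_iff, AddMonoidAlgebra.coeff_single_mul_add,
      coeff_inducedAut_apply]
    exact mul_ne_zero hc (Finsupp.mem_support_iff.1 ha)
  obtain ⟨a₁, ha₁, a₂, ha₂, hne⟩ := one_lt_card.1 hαcard
  obtain ⟨m₁, hm₁⟩ := hmem a₁ ha₁
  obtain ⟨m₂, hm₂⟩ := hmem a₂ ha₂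
  obtain ⟨k₁, rfl⟩ := hαsupp a₁ ha₁
  obtain ⟨k₂, rfl⟩ := hαsupp a₂ ha₂
  have hk : k₁ - k₂ ≠ 0 := sub_ne_zero.2 fun h => hne (by rw [h])
  have hprop : (k₁ - k₂) • φ t = (m₁ - m₂) • t := by
    rw [sub_smul, sub_smul, ← map_zsmul, ← map_zsmul, ← hm₁, ← hm₂]
    abel
  obtain ⟨i, hi⟩ : ∃ i, t i ≠ 0 := by simpa [Finsupp.ne_iff] using ht
  have hφt := φ.apply_eq_or_eq_neg_of_smul_apply_eq_smul (Finsupp.applyAddHom i) hi hk hprop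
  refine ⟨hφt, hφt.imp (fun h => ?_) (inducedAut_apply_eq_of_supportedOn hαsupp)⟩
  rw [inducedAut_apply_eq_of_supportedOn hαsupp (ψ := AddEquiv.refl _) h, inducedAut_refl]
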